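/- arXiv:1301.7464 — 2 statements merged into one kernel-verified Lean document; each statement's English description precedes it below -/
import Mathlib

section
/- Fix Δ ∈ (0, C). There exist a finite constant a and a threshold M_0 (both depending only on P_X, W and Δ) such that for every real M ≥ M_0, setting N = ⌈log M/(C−Δ)⌉, one has P[S_N < log M] ≤ 1/2 and (1 − P[S_N < log M])^{−1} · Σ_{n=0}^{N−1} E[exp(−[S_n − log M]^+)] ≤ (log M)/C + a. -/
open MeasureTheory ProbabilityTheory

/-- Output marginal `P_Y(y) = Σ_x P_X(x) W(y|x)`. -/
noncomputable def outDist {𝒳 𝒴 : Type*} [Fintype 𝒳] (pX : 𝒳 → ℝ) (W : 𝒳 → 𝒴 → ℝ)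
    (y : 𝒴) : ℝ := ∑ x, pX x * W x y

/-- Information density `i(x;y) = log (W(y|x) / P_Y(y))`. -/
noncomputable def infoDen {𝒳 𝒴 : Type*} [Fintype 𝒳] (pX : 𝒳 → ℝ) (W : 𝒳 → 𝒴 → ℝ)
    (x : 𝒳) (y : 𝒴) : ℝ := Real.log (W x y / outDist pX W y)

/-!
The information densities `ξ k = i(X_k; Y_k)` are bounded i.i.d. steps with mean `C`, so `S_n` is a
random walk with positive drift; write `γ = log M`. Since the derivative of
`t ↦ exp (t (C - Δ)) E[exp (-t ξ)]` at `t = 0` is `-Δ < 0`, some `t ∈ (0, 1]` makes this number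
`r < 1`, and then also `ρ = E[exp (-t ξ)] < 1`. The Chernoff bound gives `P[S_N < γ] ≤ r ^ N`.

For the sum, split according to the first time `τ` at which the walk reaches `γ`. The terms with
`n < τ` are at most `1` and add up to `E[min (τ, N)]`, which Wald's identity bounds by
`(γ + B) / C`, where `B` bounds the steps, because the walk overshoots `γ` by at most one
step. For `n ≥ τ` the term is at most `exp (-[S_n - S_τ]⁺) ≤ exp (-t (S_n - S_τ))`; since
`{τ = j}` is independent of the later steps, these contribute at most
`∑_j P[τ = j] ∑_m ρ ^ m ≤ 1 / (1 - ρ)`. Finally `N r ^ N → 0`, so the factor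
`(1 - P[S_N < γ])⁻¹` costs only an additive constant.
-/

open Finset Real Filter Topology

section Path

variable (s : ℕ → ℝ) (γ : ℝ)

-- For the first passage time `τ` of `s` above `γ`, these are the events `n < τ` and `τ = j`.
def StaysBelow (n : ℕ) : Prop := ∀ l ≤ n, s l < γ

def FirstCrossesAt (j : ℕ) : Prop := γ ≤ s j ∧ ∀ l < j, s l < γ

variable {s γ}

lemma FirstCrossesAt.eq {i j : ℕ} (hi : FirstCrossesAt s γ i) (hj : FirstCrossesAt s γ j) :
    i = j := by
  by_contra hne
  rcases Nat.lt_or_gt_of_ne hne with h | h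
  · exact (hj.2 i h).not_ge hi.1
  · exact (hi.2 j h).not_ge hj.1

lemma exists_firstCrossesAt_of_not_staysBelow {n : ℕ} (h : ¬ StaysBelow s γ n) :
    ∃ j ≤ n, FirstCrossesAt s γ j := by
  classical
  have hex : ∃ l, l ≤ n ∧ γ ≤ s l := by simpa [StaysBelow] using h
  refine ⟨Nat.find hex, (Nat.find_spec hex).1, (Nat.find_spec hex).2, fun l hl => ?_⟩
  have := Nat.find_min hex hl
  simp only [not_and, not_le] at this
  exact this (hl.le.trans (Nat.find_spec hex).1)

open Classical in
lemma exp_neg_max_sub_le_staysBelow_add_firstCrossesAt (n : ℕ) :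
    exp (-max (s n - γ) 0) ≤ (if StaysBelow s γ n then 1 else 0) +
      ∑ j ∈ range (n + 1), if FirstCrossesAt s γ j then exp (-max (s n - s j) 0) else 0 := by
  have hterm : ∀ j ∈ range (n + 1),
      0 ≤ if FirstCrossesAt s γ j then exp (-max (s n - s j) 0) else 0 := by
    intro j _; split_ifs <;> positivity
  by_cases h : StaysBelow s γ n
  · have : exp (-max (s n - γ) 0) ≤ 1 := exp_le_one_iff.mpr (by simp)
    rw [if_pos h]
    linarith [sum_nonneg hterm]
  · obtain ⟨j, hjn, hj⟩ := exists_firstCrossesAt_of_not_staysBelow h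
    rw [if_neg h, zero_add]
    calc exp (-max (s n - γ) 0) ≤ exp (-max (s n - s j) 0) :=
          exp_le_exp.mpr (neg_le_neg (max_le_max (by linarith [hj.1]) le_rfl))
      _ = if FirstCrossesAt s γ j then exp (-max (s n - s j) 0) else 0 := (if_pos hj).symm
      _ ≤ _ := single_le_sum hterm (mem_range.mpr (Nat.lt_succ_of_le hjn))

open Classical in
lemma sum_ite_staysBelow_le {x : ℕ → ℝ} {B : ℝ} (hx : ∀ k, x k ≤ B) (hγB : 0 ≤ γ + B)
    (N : ℕ) :
    ∑ k ∈ range N, (if StaysBelow (fun l => ∑ i ∈ range l, x i) γ k then x k else 0)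
      ≤ γ + B := by
  induction N with
  | zero => simpa using hγB
  | succ N ih =>
    by_cases h : StaysBelow (fun l => ∑ i ∈ range l, x i) γ N
    · have hall : ∀ k ∈ range (N + 1),
          (if StaysBelow (fun l => ∑ i ∈ range l, x i) γ k then x k else 0) = x k :=
        fun k hk => if_pos fun l hl => h l (hl.trans (Nat.lt_succ_iff.mp (mem_range.mp hk)))
      rw [sum_congr rfl hall, sum_range_succ]
      linarith [h N le_rfl, hx N]
    · rw [sum_range_succ, if_neg h, add_zero]
      exact ih

end Path

lemma sum_range_sum_mul_pow_sub_le {a : ℕ → ℝ} (ha : ∀ j, 0 ≤ a j) {ρ : ℝ} (hρ0 : 0 ≤ ρ)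
    (hρ1 : ρ < 1) (N : ℕ) :
    ∑ n ∈ range N, ∑ j ∈ range (n + 1), a j * ρ ^ (n - j)
      ≤ (∑ j ∈ range N, a j) * (1 - ρ)⁻¹ := by
  have hswap := sum_Ico_Ico_comm 0 N fun j n => a j * ρ ^ (n - j)
  simp only [← range_eq_Ico] at hswap
  rw [← hswap, sum_mul]
  refine sum_le_sum fun j _ => ?_
  rw [← mul_sum, sum_Ico_eq_sum_range]
  simp only [Nat.add_sub_cancel_left]
  refine mul_le_mul_of_nonneg_left ?_ (ha j)
  simpa [← range_eq_Ico] using geom_sum_Ico_le_of_lt_one (m := 0) (n := N - j) hρ0 hρ1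

lemma inv_one_sub_mul_le {p x y : ℝ} (hp : p < 1) (hpy : p * y ≤ 1) (hxy : x + 1 ≤ y) :
    (1 - p)⁻¹ * x ≤ y := by
  rw [inv_mul_le_iff₀ (sub_pos.mpr hp)]
  linarith

section Mgf

variable {Ω : Type*} [MeasurableSpace Ω] {μ : Measure Ω} {X : Ω → ℝ}

lemma integrable_exp_mul_of_abs_le [IsFiniteMeasure μ] (hX : Measurable X) {B : ℝ}
    (hB : ∀ ω, |X ω| ≤ B) (t : ℝ) : Integrable (fun ω => exp (t * X ω)) μ := by
  refine .of_bound (by fun_prop) (exp (|t| * B)) (ae_of_all _ fun ω => ?_)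
  rw [norm_of_nonneg (exp_pos _).le, exp_le_exp]
  calc t * X ω ≤ |t * X ω| := le_abs_self _
    _ = |t| * |X ω| := abs_mul _ _
    _ ≤ |t| * B := mul_le_mul_of_nonneg_left (hB ω) (abs_nonneg t)

lemma ProbabilityTheory.IdentDistrib.mgf_eq {Ω' : Type*} [MeasurableSpace Ω']
    {μ' : Measure Ω'} {Y : Ω' → ℝ} (h : IdentDistrib X Y μ μ') (t : ℝ) :
    mgf X μ t = mgf Y μ' t :=
  (h.comp (measurable_const_mul t).exp).integral_eq

lemma exists_exp_mul_mgf_neg_lt_one [IsProbabilityMeasure μ] (hX : Measurable X) {B : ℝ}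
    (hB : ∀ ω, |X ω| ≤ B) {β : ℝ} (hβ : β < μ[X]) :
    ∃ t, 0 < t ∧ t ≤ 1 ∧ exp (t * β) * mgf X μ (-t) < 1 := by
  set F : ℝ → ℝ := fun t => exp (t * β) * mgf X μ (-t)
  have hmgf : HasDerivAt (mgf X μ) μ[X] 0 := by
    have hint : (0 : ℝ) ∈ interior (integrableExpSet X μ) := by
      simp [integrableExpSet, integrable_exp_mul_of_abs_le hX hB]
    simpa using hasDerivAt_mgf hint
  have hF : HasDerivAt F (β - μ[X]) 0 := by
    have h1 : HasDerivAt (fun t => exp (t * β)) β 0 := by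
      simpa using ((hasDerivAt_id (0 : ℝ)).mul_const β).exp
    have h2 : HasDerivAt (fun t => mgf X μ (-t)) (-μ[X]) 0 :=
      ((neg_zero (G := ℝ) ▸ hmgf).comp (0 : ℝ) (hasDerivAt_neg (0 : ℝ))).congr_deriv
        (mul_neg_one _)
    exact (h1.mul h2).congr_deriv (by simp [sub_eq_add_neg])
  have hslope := (hasDerivAt_iff_tendsto_slope.mp hF).mono_left (nhdsGT_le_nhdsNE (0 : ℝ))
  have hev : ∀ᶠ t in 𝓝[>] (0 : ℝ), slope F 0 t < 0 ∧ t ∈ Set.Ioc 0 1 :=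
    (hslope.eventually (gt_mem_nhds (sub_neg.mpr hβ))).and (Ioc_mem_nhdsGT one_pos)
  obtain ⟨t, hs, ht0, ht1⟩ := hev.exists
  refine ⟨t, ht0, ht1, ?_⟩
  rw [slope_def_field, sub_zero, div_neg_iff] at hs
  rcases hs with ⟨-, h⟩ | ⟨h, -⟩
  · exact absurd h (not_lt.mpr ht0.le)
  · simpa [F] using h

end Mgf

def walk {Ω : Type*} (ξ : ℕ → Ω → ℝ) (ω : Ω) (n : ℕ) : ℝ := ∑ k ∈ range n, ξ k ω

abbrev blockSigma {Ω : Type*} (ξ : ℕ → Ω → ℝ) (I : Set ℕ) : MeasurableSpace Ω :=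
  ⨆ i ∈ I, MeasurableSpace.comap (ξ i) inferInstance

structure IsBoundedIID {Ω : Type*} [MeasurableSpace Ω] (ξ : ℕ → Ω → ℝ) (μ : Measure Ω)
    (B : ℝ) : Prop where
  measurable : ∀ k, Measurable (ξ k)
  indep : iIndepFun ξ μ
  identDistrib : ∀ k, IdentDistrib (ξ k) (ξ 0) μ μ
  abs_le : ∀ k ω, |ξ k ω| ≤ B

section RandomWalk

variable {Ω : Type*} {ξ : ℕ → Ω → ℝ}

lemma walk_sub_walk (ω : Ω) {j n : ℕ} (h : j ≤ n) :
    walk ξ ω n - walk ξ ω j = ∑ k ∈ Ico j n, ξ k ω :=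
  (sum_Ico_eq_sub _ h).symm

lemma measurable_blockSigma {i : ℕ} {I : Set ℕ} (hi : i ∈ I) :
    Measurable[blockSigma ξ I] (ξ i) :=
  (comap_measurable (ξ i)).mono
    (le_iSup₂ (f := fun i (_ : i ∈ I) => MeasurableSpace.comap (ξ i) inferInstance) i hi) le_rfl

lemma measurable_sum_blockSigma {s : Finset ℕ} {I : Set ℕ} (hs : ↑s ⊆ I) :
    Measurable[blockSigma ξ I] fun ω => ∑ k ∈ s, ξ k ω :=
  Finset.measurable_sum _ fun _ hk => measurable_blockSigma (hs hk)

lemma measurableSet_staysBelow (γ : ℝ) (n : ℕ) :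
    MeasurableSet[blockSigma ξ (Set.Iio n)] {ω | StaysBelow (walk ξ ω) γ n} := by
  simp only [StaysBelow, Set.ofPred_forall]
  refine MeasurableSet.iInter fun l => MeasurableSet.iInter fun hl => ?_
  exact measurableSet_lt (measurable_sum_blockSigma (by intro k hk; simp at hk ⊢; omega))
    measurable_const

lemma measurableSet_firstCrossesAt (γ : ℝ) (j : ℕ) :
    MeasurableSet[blockSigma ξ (Set.Iio j)] {ω | FirstCrossesAt (walk ξ ω) γ j} := by
  simp only [FirstCrossesAt, Set.ofPred_and, Set.ofPred_forall]
  refine .inter (measurableSet_le measurable_const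
    (measurable_sum_blockSigma (by intro k hk; simpa using hk))) ?_
  refine MeasurableSet.iInter fun l => MeasurableSet.iInter fun hl => ?_
  exact measurableSet_lt (measurable_sum_blockSigma (by intro k hk; simp at hk ⊢; omega))
    measurable_const

variable [MeasurableSpace Ω] {μ : Measure Ω}

lemma blockSigma_le (hmeas : ∀ k, Measurable (ξ k)) (I : Set ℕ) :
    blockSigma ξ I ≤ ‹MeasurableSpace Ω› :=
  iSup₂_le fun i _ => (hmeas i).comap_le

lemma integral_indicator_eq_measureReal_mul (hmeas : ∀ k, Measurable (ξ k))
    (hind : iIndepFun ξ μ) {I J : Set ℕ} (hIJ : Disjoint I J) {A : Set Ω}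
    (hA : MeasurableSet[blockSigma ξ I] A) {g : Ω → ℝ} (hg : Measurable[blockSigma ξ J] g) :
    ∫ ω, A.indicator g ω ∂μ = μ.real A * ∫ ω, g ω ∂μ := by
  have hIndep : Indep (blockSigma ξ I) (blockSigma ξ J) μ :=
    indep_iSup_of_disjoint (fun i => (hmeas i).comap_le)
      ((iIndepFun_iff_iIndep _ _ _).mp hind) hIJ
  have hA1 : Measurable[blockSigma ξ I] (A.indicator (1 : Ω → ℝ)) :=
    measurable_const.indicator hA
  have hfun : IndepFun (A.indicator (1 : Ω → ℝ)) g μ := by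
    rw [IndepFun_iff_Indep]
    exact indep_of_indep_of_le_right (indep_of_indep_of_le_left hIndep hA1.comap_le) hg.comap_le
  calc ∫ ω, A.indicator g ω ∂μ = ∫ ω, A.indicator 1 ω * g ω ∂μ := by
        congr 1; funext ω; by_cases h : ω ∈ A <;> simp [h]
    _ = μ.real A * ∫ ω, g ω ∂μ := by
        rw [hfun.integral_fun_mul_eq_mul_integral
          (hA1.mono (blockSigma_le hmeas I) le_rfl).aestronglyMeasurable
          (hg.mono (blockSigma_le hmeas J) le_rfl).aestronglyMeasurable,
          integral_indicator_one (blockSigma_le hmeas I _ hA)]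

lemma sum_measureReal_firstCrossesAt_le_one [IsProbabilityMeasure μ]
    (hmeas : ∀ k, Measurable (ξ k)) (γ : ℝ) (N : ℕ) :
    ∑ j ∈ range N, μ.real {ω | FirstCrossesAt (walk ξ ω) γ j} ≤ 1 := by
  set E : ℕ → Set Ω := fun j => {ω | FirstCrossesAt (walk ξ ω) γ j}
  have hdisj : (↑(range N) : Set ℕ).PairwiseDisjoint E := fun i _ j _ hij =>
    Set.disjoint_left.mpr fun ω (hi : FirstCrossesAt (walk ξ ω) γ i)
      (hj : FirstCrossesAt (walk ξ ω) γ j) => hij (hi.eq hj)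
  rw [← measureReal_biUnion_finset hdisj
    fun j _ => blockSigma_le hmeas _ _ (measurableSet_firstCrossesAt γ j)]
  exact measureReal_le_one

lemma mgf_sum_eq_pow (hmeas : ∀ k, Measurable (ξ k)) (hind : iIndepFun ξ μ)
    (hident : ∀ k, IdentDistrib (ξ k) (ξ 0) μ μ) (s : Finset ℕ) (t : ℝ) :
    mgf (∑ k ∈ s, ξ k) μ t = mgf (ξ 0) μ t ^ s.card := by
  rw [hind.mgf_sum hmeas, prod_congr rfl fun k _ => (hident k).mgf_eq t, prod_const]

namespace IsBoundedIID

variable [IsProbabilityMeasure μ] {B : ℝ}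

lemma integrable_exp_mul_sum (h : IsBoundedIID ξ μ B) (s : Finset ℕ) (t : ℝ) :
    Integrable (fun ω => exp (t * (∑ k ∈ s, ξ k) ω)) μ :=
  h.indep.integrable_exp_mul_sum h.measurable fun k _ =>
    integrable_exp_mul_of_abs_le (h.measurable k) (h.abs_le k) t

lemma measureReal_walk_lt_le (h : IsBoundedIID ξ μ B) {t : ℝ} (ht : 0 ≤ t) {β γ : ℝ} {N : ℕ}
    (hγ : γ ≤ N * β) :
    μ.real {ω | walk ξ ω N < γ} ≤ (exp (t * β) * mgf (ξ 0) μ (-t)) ^ N := by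
  calc μ.real {ω | walk ξ ω N < γ} ≤ μ.real {ω | (∑ k ∈ range N, ξ k) ω ≤ γ} :=
        measureReal_mono fun ω hω => by simpa [walk] using le_of_lt hω
    _ ≤ exp (- -t * γ) * mgf (∑ k ∈ range N, ξ k) μ (-t) :=
        measure_le_le_exp_mul_mgf γ (by linarith) (h.integrable_exp_mul_sum _ _)
    _ ≤ (exp (t * β) * mgf (ξ 0) μ (-t)) ^ N := by
        rw [mgf_sum_eq_pow h.measurable h.indep h.identDistrib, card_range, neg_neg, mul_pow,
          ← exp_nat_mul]
        exact mul_le_mul_of_nonneg_right (exp_le_exp.mpr (by nlinarith)) (pow_nonneg mgf_nonneg N)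

lemma integral_exp_neg_max_sum_le (h : IsBoundedIID ξ μ B) {t : ℝ} (ht0 : 0 ≤ t) (ht1 : t ≤ 1)
    (s : Finset ℕ) :
    ∫ ω, exp (-max (∑ k ∈ s, ξ k ω) 0) ∂μ ≤ mgf (ξ 0) μ (-t) ^ s.card := by
  have hpt : ∀ x : ℝ, -max x 0 ≤ -t * x := fun x => by
    rcases le_total 0 x with hx | hx
    · rw [max_eq_left hx]; nlinarith
    · rw [max_eq_right hx]; nlinarith
  calc ∫ ω, exp (-max (∑ k ∈ s, ξ k ω) 0) ∂μ ≤ ∫ ω, exp (-t * (∑ k ∈ s, ξ k) ω) ∂μ :=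
        integral_mono_of_nonneg (ae_of_all _ fun _ => (exp_pos _).le)
          (h.integrable_exp_mul_sum _ _)
          (ae_of_all _ fun ω => exp_le_exp.mpr (by simpa using hpt (∑ k ∈ s, ξ k ω)))
    _ = mgf (ξ 0) μ (-t) ^ s.card := mgf_sum_eq_pow h.measurable h.indep h.identDistrib s (-t)

lemma sum_measureReal_staysBelow_mul_le (h : IsBoundedIID ξ μ B) {γ : ℝ} (hγB : 0 ≤ γ + B)
    (N : ℕ) :
    (∑ n ∈ range N, μ.real {ω | StaysBelow (walk ξ ω) γ n}) * μ[ξ 0] ≤ γ + B := by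
  set E : ℕ → Set Ω := fun n => {ω | StaysBelow (walk ξ ω) γ n}
  have hint : ∀ n, Integrable ((E n).indicator (ξ n)) μ := fun n =>
    (Integrable.of_bound (h.measurable n).aestronglyMeasurable B
      (ae_of_all _ fun ω => h.abs_le n ω)).indicator
      (blockSigma_le h.measurable _ _ (measurableSet_staysBelow γ n))
  have hterm : ∀ n, ∫ ω, (E n).indicator (ξ n) ω ∂μ = μ.real (E n) * μ[ξ 0] := fun n => by
    rw [integral_indicator_eq_measureReal_mul h.measurable h.indep (I := Set.Iio n) (J := {n})
      (by simp) (measurableSet_staysBelow γ n) (measurable_blockSigma rfl),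
      (h.identDistrib n).integral_eq]
  calc (∑ n ∈ range N, μ.real (E n)) * μ[ξ 0]
      = ∫ ω, ∑ n ∈ range N, (E n).indicator (ξ n) ω ∂μ := by
        rw [integral_finsetSum _ fun n _ => hint n, sum_mul]
        exact sum_congr rfl fun n _ => (hterm n).symm
    _ ≤ ∫ _, γ + B ∂μ :=
        integral_mono (integrable_finsetSum _ fun n _ => hint n) (integrable_const _)
          fun ω => sum_ite_staysBelow_le (x := fun k => ξ k ω)
            (fun k => (le_abs_self _).trans (h.abs_le k ω)) hγB N
    _ = γ + B := by simp

lemma integral_indicator_firstCrossesAt_le (h : IsBoundedIID ξ μ B) {t : ℝ} (ht0 : 0 ≤ t)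
    (ht1 : t ≤ 1) (γ : ℝ) (j n : ℕ) :
    ∫ ω, {ω | FirstCrossesAt (walk ξ ω) γ j}.indicator
        (fun ω => exp (-max (∑ k ∈ Ico j n, ξ k ω) 0)) ω ∂μ
      ≤ μ.real {ω | FirstCrossesAt (walk ξ ω) γ j} * mgf (ξ 0) μ (-t) ^ (n - j) := by
  have hD : Measurable[blockSigma ξ (Set.Ici j)]
      fun ω => exp (-max (∑ k ∈ Ico j n, ξ k ω) 0) :=
    ((measurable_sum_blockSigma (by intro k hk; simp at hk ⊢; omega)).max
      measurable_const).neg.exp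
  rw [integral_indicator_eq_measureReal_mul h.measurable h.indep (Set.Iio_disjoint_Ici le_rfl)
    (measurableSet_firstCrossesAt γ j) hD]
  exact mul_le_mul_of_nonneg_left
    (by simpa using h.integral_exp_neg_max_sum_le ht0 ht1 (Ico j n)) measureReal_nonneg

lemma integral_exp_neg_max_walk_sub_le (h : IsBoundedIID ξ μ B) {t : ℝ} (ht0 : 0 ≤ t)
    (ht1 : t ≤ 1) (γ : ℝ) (n : ℕ) :
    ∫ ω, exp (-max (walk ξ ω n - γ) 0) ∂μ
      ≤ μ.real {ω | StaysBelow (walk ξ ω) γ n} +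
        ∑ j ∈ range (n + 1),
          μ.real {ω | FirstCrossesAt (walk ξ ω) γ j} * mgf (ξ 0) μ (-t) ^ (n - j) := by
  classical
  set E := {ω | StaysBelow (walk ξ ω) γ n}
  set F : ℕ → Set Ω := fun j => {ω | FirstCrossesAt (walk ξ ω) γ j}
  set D : ℕ → Ω → ℝ := fun j ω => exp (-max (∑ k ∈ Ico j n, ξ k ω) 0)
  have hE1 : Integrable (E.indicator (1 : Ω → ℝ)) μ :=
    (integrable_const 1).indicator (blockSigma_le h.measurable _ _ (measurableSet_staysBelow γ n))
  have hFD : ∀ j, Integrable ((F j).indicator (D j)) μ := fun j =>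
    (Integrable.of_bound ((Finset.measurable_sum _ fun k _ => h.measurable k).max
      measurable_const).neg.exp.aestronglyMeasurable 1 (ae_of_all _ fun ω => by
      simp [abs_of_pos (exp_pos _)])).indicator
      (blockSigma_le h.measurable _ _ (measurableSet_firstCrossesAt γ j))
  have hpt : ∀ ω, exp (-max (walk ξ ω n - γ) 0)
      ≤ E.indicator 1 ω + ∑ j ∈ range (n + 1), (F j).indicator (D j) ω := by
    intro ω
    refine (exp_neg_max_sub_le_staysBelow_add_firstCrossesAt (s := walk ξ ω) n).trans_eq ?_
    simp only [Set.indicator_apply]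
    congr 1
    refine sum_congr rfl fun j hj => ?_
    rw [walk_sub_walk ω (Nat.lt_succ_iff.mp (mem_range.mp hj))]
    rfl
  calc ∫ ω, exp (-max (walk ξ ω n - γ) 0) ∂μ
      ≤ ∫ ω, E.indicator 1 ω + ∑ j ∈ range (n + 1), (F j).indicator (D j) ω ∂μ :=
        integral_mono_of_nonneg (ae_of_all _ fun _ => (exp_pos _).le)
          (hE1.add (integrable_finsetSum _ fun j _ => hFD j)) (ae_of_all _ hpt)
    _ = μ.real E + ∑ j ∈ range (n + 1), ∫ ω, (F j).indicator (D j) ω ∂μ := by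
        rw [integral_add hE1 (integrable_finsetSum _ fun j _ => hFD j),
          integral_indicator_one (blockSigma_le h.measurable _ _ (measurableSet_staysBelow γ n)),
          integral_finsetSum _ fun j _ => hFD j]
    _ ≤ _ := add_le_add le_rfl
        (sum_le_sum fun j _ => h.integral_indicator_firstCrossesAt_le ht0 ht1 γ j n)

lemma sum_integral_exp_neg_max_walk_sub_le (h : IsBoundedIID ξ μ B) {t : ℝ} (ht0 : 0 ≤ t)
    (ht1 : t ≤ 1) (hρ : mgf (ξ 0) μ (-t) < 1) (hC : 0 < μ[ξ 0]) {γ : ℝ} (hγB : 0 ≤ γ + B)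
    (N : ℕ) :
    ∑ n ∈ range N, ∫ ω, exp (-max (walk ξ ω n - γ) 0) ∂μ
      ≤ (γ + B) / μ[ξ 0] + (1 - mgf (ξ 0) μ (-t))⁻¹ := by
  set ρ := mgf (ξ 0) μ (-t)
  calc ∑ n ∈ range N, ∫ ω, exp (-max (walk ξ ω n - γ) 0) ∂μ
      ≤ ∑ n ∈ range N, (μ.real {ω | StaysBelow (walk ξ ω) γ n} +
          ∑ j ∈ range (n + 1), μ.real {ω | FirstCrossesAt (walk ξ ω) γ j} * ρ ^ (n - j)) :=
        sum_le_sum fun n _ => h.integral_exp_neg_max_walk_sub_le ht0 ht1 γ n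
    _ ≤ (γ + B) / μ[ξ 0] +
          (∑ j ∈ range N, μ.real {ω | FirstCrossesAt (walk ξ ω) γ j}) * (1 - ρ)⁻¹ := by
        rw [sum_add_distrib]
        exact add_le_add ((le_div_iff₀ hC).mpr (h.sum_measureReal_staysBelow_mul_le hγB N))
          (sum_range_sum_mul_pow_sub_le (fun _ => measureReal_nonneg) mgf_nonneg hρ N)
    _ ≤ (γ + B) / μ[ξ 0] + 1 * (1 - ρ)⁻¹ := by
        gcongr
        exact sum_measureReal_firstCrossesAt_le_one h.measurable γ N
    _ = (γ + B) / μ[ξ 0] + (1 - ρ)⁻¹ := by rw [one_mul]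

theorem exists_measureReal_walk_lt_le_and_sum_integral_le (h : IsBoundedIID ξ μ B) {β : ℝ}
    (hβ0 : 0 ≤ β) (hβ : β < μ[ξ 0]) :
    ∃ a : ℝ, ∃ N₀ : ℕ, ∀ N ≥ N₀, ∀ γ, 0 ≤ γ → γ ≤ N * β →
      μ.real {ω | walk ξ ω N < γ} ≤ 1 / 2 ∧
      (1 - μ.real {ω | walk ξ ω N < γ})⁻¹ *
          ∑ n ∈ range N, ∫ ω, exp (-max (walk ξ ω n - γ) 0) ∂μ
        ≤ γ / μ[ξ 0] + a := by
  set C := μ[ξ 0]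
  have hC : 0 < C := hβ0.trans_lt hβ
  have hB : 0 ≤ B := by
    have := nonempty_of_isProbabilityMeasure μ
    exact (abs_nonneg _).trans (h.abs_le 0 (Classical.arbitrary Ω))
  obtain ⟨t, ht0, ht1, hr⟩ := exists_exp_mul_mgf_neg_lt_one (h.measurable 0) (h.abs_le 0) hβ
  set ρ := mgf (ξ 0) μ (-t)
  set r := exp (t * β) * ρ
  have hρr : ρ ≤ r := le_mul_of_one_le_left mgf_nonneg (one_le_exp (by positivity))
  have hr0 : 0 ≤ r := mgf_nonneg.trans hρr
  set a := B / C + (1 - ρ)⁻¹ + 1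
  have ha : 1 ≤ a := by
    have : 0 ≤ (1 - ρ)⁻¹ := inv_nonneg.mpr (by linarith)
    have : 0 ≤ B / C := by positivity
    linarith
  have hlim : Tendsto (fun N : ℕ => r ^ N * (N + a)) atTop (𝓝 0) := by
    have := (tendsto_self_mul_const_pow_of_lt_one hr0 hr).add
      ((tendsto_pow_atTop_nhds_zero_of_lt_one hr0 hr).const_mul a)
    rw [mul_zero, add_zero] at this
    exact this.congr fun N => by ring
  obtain ⟨N₀, hN₀⟩ := eventually_atTop.mp (hlim.eventually (eventually_le_nhds one_half_pos))
  refine ⟨a, N₀, fun N hN γ hγ hγN => ?_⟩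
  have hp : μ.real {ω | walk ξ ω N < γ} ≤ r ^ N := h.measureReal_walk_lt_le ht0.le hγN
  have hγC : γ / C ≤ N := by
    rw [div_le_iff₀ hC]
    nlinarith
  have hpY : μ.real {ω | walk ξ ω N < γ} * (γ / C + a) ≤ 1 / 2 :=
    (mul_le_mul hp (by linarith) (by positivity) (pow_nonneg hr0 N)).trans (hN₀ N hN)
  have hp_half : μ.real {ω | walk ξ ω N < γ} ≤ 1 / 2 :=
    (le_mul_of_one_le_right measureReal_nonneg (by linarith [div_nonneg hγ hC.le])).trans hpY
  refine ⟨hp_half, inv_one_sub_mul_le (by linarith) (by linarith) ?_⟩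
  have := h.sum_integral_exp_neg_max_walk_sub_le ht0.le ht1 (hρr.trans_lt hr) hC
    (by linarith : 0 ≤ γ + B) N
  rw [add_div] at this
  linarith

end IsBoundedIID

end RandomWalk

section FiniteAlphabet

variable {P : Type*} [Fintype P] [MeasurableSpace P] [DiscreteMeasurableSpace P]
  {Ω : Type*} [MeasurableSpace Ω] {μ : Measure Ω} {q : P → ℝ}

lemma integral_comp_eq_sum_of_measure_preimage_singleton [IsFiniteMeasure μ] {Z : Ω → P}
    (hZ : Measurable Z) (hq : ∀ p, 0 ≤ q p) (hlaw : ∀ p, μ (Z ⁻¹' {p}) = ENNReal.ofReal (q p))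
    (f : P → ℝ) : ∫ ω, f (Z ω) ∂μ = ∑ p, q p * f p := by
  rw [← integral_map hZ.aemeasurable (measurable_of_finite f).aestronglyMeasurable,
    integral_fintype (f := f) .of_finite]
  simp [measureReal_def, Measure.map_apply hZ (measurableSet_singleton _), hlaw, hq]

lemma identDistrib_of_measure_preimage_singleton {Z Z' : Ω → P} (hZ : Measurable Z)
    (hZ' : Measurable Z') (h : ∀ p, μ (Z ⁻¹' {p}) = μ (Z' ⁻¹' {p})) : IdentDistrib Z Z' μ μ where
  aemeasurable_fst := hZ.aemeasurable
  aemeasurable_snd := hZ'.aemeasurable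
  map_eq := Measure.ext_of_singleton fun p => by
    rw [Measure.map_apply hZ (measurableSet_singleton p),
      Measure.map_apply hZ' (measurableSet_singleton p), h]

lemma isBoundedIID_comp {Z : ℕ → Ω → P} (hZ : ∀ k, Measurable (Z k)) (hind : iIndepFun Z μ)
    (hlaw : ∀ k p, μ (Z k ⁻¹' {p}) = ENNReal.ofReal (q p)) (f : P → ℝ) :
    IsBoundedIID (fun k ω => f (Z k ω)) μ (∑ p, |f p|) where
  measurable k := (measurable_of_finite f).comp (hZ k)
  indep := hind.comp (fun _ => f) fun _ => measurable_of_finite f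
  identDistrib k := (identDistrib_of_measure_preimage_singleton (hZ k) (hZ 0)
    fun p => by rw [hlaw, hlaw]).comp (measurable_of_finite f)
  abs_le _ ω := single_le_sum (f := fun p => |f p|) (fun p _ => abs_nonneg _) (mem_univ _)

end FiniteAlphabet

theorem stmt14_general {𝒳 𝒴 : Type*} [Fintype 𝒳] [Fintype 𝒴]
    [MeasurableSpace 𝒳] [DiscreteMeasurableSpace 𝒳]
    [MeasurableSpace 𝒴] [DiscreteMeasurableSpace 𝒴]
    (pX : 𝒳 → ℝ) (hpXpos : ∀ x, 0 < pX x)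
    (W : 𝒳 → 𝒴 → ℝ) (hWpos : ∀ x y, 0 < W x y)
    (C : ℝ) (hCdef : C = ∑ x, ∑ y, pX x * W x y * infoDen pX W x y)
    {Ω : Type*} [MeasurableSpace Ω] (μ : Measure Ω) [IsProbabilityMeasure μ]
    (X : ℕ → Ω → 𝒳) (Y : ℕ → Ω → 𝒴)
    (hXm : ∀ k, Measurable (X k)) (hYm : ∀ k, Measurable (Y k))
    -- `((X_k, Y_k))_k` is an i.i.d. sequence with law `P_{XY}`:
    (hXYindep : iIndepFun (fun k ω => (X k ω, Y k ω)) μ)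
    (hXYlaw : ∀ k x y, μ {ω | X k ω = x ∧ Y k ω = y} = ENNReal.ofReal (pX x * W x y))
    (Δ : ℝ) (hΔpos : 0 < Δ) (hΔC : Δ < C) :
    ∃ a M₀ : ℝ, ∀ M : ℝ, M₀ ≤ M →
      (μ {ω | (∑ k ∈ Finset.range ⌈Real.log M / (C - Δ)⌉₊,
            infoDen pX W (X k ω) (Y k ω)) < Real.log M}).toReal ≤ 1 / 2
      ∧ (1 - (μ {ω | (∑ k ∈ Finset.range ⌈Real.log M / (C - Δ)⌉₊,
            infoDen pX W (X k ω) (Y k ω)) < Real.log M}).toReal)⁻¹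
          * ∑ n ∈ Finset.range ⌈Real.log M / (C - Δ)⌉₊,
              (∫ ω, Real.exp (-(max ((∑ k ∈ Finset.range n,
                infoDen pX W (X k ω) (Y k ω)) - Real.log M) 0)) ∂μ)
        ≤ Real.log M / C + a := by
  set Z : ℕ → Ω → 𝒳 × 𝒴 := fun k ω => (X k ω, Y k ω)
  set f : 𝒳 × 𝒴 → ℝ := fun p => infoDen pX W p.1 p.2
  have hZ : ∀ k, Measurable (Z k) := fun k => (hXm k).prodMk (hYm k)
  have hlaw : ∀ k p, μ (Z k ⁻¹' {p}) = ENNReal.ofReal (pX p.1 * W p.1 p.2) := fun k p => by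
    rw [← hXYlaw k p.1 p.2]
    congr 1
    ext ω
    simp [Z, Prod.ext_iff]
  have hmean : μ[fun ω => f (Z 0 ω)] = C := by
    rw [integral_comp_eq_sum_of_measure_preimage_singleton (hZ 0)
      (fun p => (mul_pos (hpXpos _) (hWpos _ _)).le) (hlaw 0), hCdef, ← Fintype.sum_prod_type']
  obtain ⟨a, N₀, h⟩ :=
    (isBoundedIID_comp hZ hXYindep hlaw f).exists_measureReal_walk_lt_le_and_sum_integral_le
      (sub_nonneg.mpr hΔC.le) (by linarith : C - Δ < μ[fun ω => f (Z 0 ω)])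
  refine ⟨a, exp (N₀ * (C - Δ)), fun M hM => ?_⟩
  have hγ : N₀ * (C - Δ) ≤ log M := (le_log_iff_exp_le ((exp_pos _).trans_le hM)).mpr hM
  have hN : N₀ ≤ ⌈log M / (C - Δ)⌉₊ := by
    exact_mod_cast ((le_div_iff₀ (by linarith)).mpr hγ).trans (Nat.le_ceil _)
  have hγN : log M ≤ ⌈log M / (C - Δ)⌉₊ * (C - Δ) :=
    (div_le_iff₀ (by linarith)).mp (Nat.le_ceil _)
  have := h _ hN (log M) ((by positivity : (0 : ℝ) ≤ N₀ * (C - Δ)).trans hγ) hγN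
  rw [hmean] at this
  exact this

/-- Fix `Δ ∈ (0, C)`.  There are a finite constant `a` and a
threshold `M₀` such that for every real `M ≥ M₀`, with `N = ⌈log M/(C−Δ)⌉`:
`P[S_N < log M] ≤ 1/2` and
`(1 − P[S_N < log M])⁻¹ · Σ_{n=0}^{N−1} E[exp(−[Sₙ − log M]⁺)] ≤ (log M)/C + a`. -/
theorem stmt14 {𝒳 𝒴 : Type*} [Fintype 𝒳] [Nonempty 𝒳] [Fintype 𝒴] [Nonempty 𝒴]
    [MeasurableSpace 𝒳] [DiscreteMeasurableSpace 𝒳]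
    [MeasurableSpace 𝒴] [DiscreteMeasurableSpace 𝒴]
    (pX : 𝒳 → ℝ) (hpXpos : ∀ x, 0 < pX x) (hpXsum : ∑ x, pX x = 1)
    (W : 𝒳 → 𝒴 → ℝ) (hWpos : ∀ x y, 0 < W x y) (hWsum : ∀ x, ∑ y, W x y = 1)
    (C : ℝ) (hCdef : C = ∑ x, ∑ y, pX x * W x y * infoDen pX W x y)
    -- `P_{XY} ≠ P_X ⊗ P_Y`, equivalently `C > 0`:
    (hC : 0 < C)
    {Ω : Type*} [MeasurableSpace Ω] (μ : Measure Ω) [IsProbabilityMeasure μ]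
    (X : ℕ → Ω → 𝒳) (Y : ℕ → Ω → 𝒴)
    (hXm : ∀ k, Measurable (X k)) (hYm : ∀ k, Measurable (Y k))
    -- `((X_k, Y_k))_k` is an i.i.d. sequence with law `P_{XY}`:
    (hXYindep : iIndepFun (fun k ω => (X k ω, Y k ω)) μ)
    (hXYlaw : ∀ k x y, μ {ω | X k ω = x ∧ Y k ω = y} = ENNReal.ofReal (pX x * W x y))
    (Δ : ℝ) (hΔpos : 0 < Δ) (hΔC : Δ < C) :
    ∃ a M₀ : ℝ, ∀ M : ℝ, M₀ ≤ M →
      (μ {ω | (∑ k ∈ Finset.range ⌈Real.log M / (C - Δ)⌉₊,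
            infoDen pX W (X k ω) (Y k ω)) < Real.log M}).toReal ≤ 1 / 2
      ∧ (1 - (μ {ω | (∑ k ∈ Finset.range ⌈Real.log M / (C - Δ)⌉₊,
            infoDen pX W (X k ω) (Y k ω)) < Real.log M}).toReal)⁻¹
          * ∑ n ∈ Finset.range ⌈Real.log M / (C - Δ)⌉₊,
              (∫ ω, Real.exp (-(max ((∑ k ∈ Finset.range n,
                infoDen pX W (X k ω) (Y k ω)) - Real.log M) 0)) ∂μ)
        ≤ Real.log M / C + a :=
  stmt14_general pX hpXpos W hWpos C hCdef μ X Y hXm hYm hXYindep hXYlaw Δ hΔpos hΔC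
end

section
/- For the binary symmetric channel with crossover probability p ∈ (0, 1/2) and uniform input distribution: for every n ≥ 1 and every real M ≥ 1, E[min{1, M · g((X_1,…,X_n),(Y_1,…,Y_n))}] ≤ Σ_{t=0}^{n} C(n,t) p^t (1−p)^{n−t} · min{1, M · 2^{−n} Σ_{j=0}^{t} C(n,j)}, where C(n,t) denotes the binomial coefficient and g(x^n, y^n) = 2^{−n} · #{x̄^n ∈ {0,1}^n : i(x̄^n; y^n) ≥ i(x^n; y^n)} with i(x^n;y^n) = Σ_{k=1}^n i(x_k;y_k). -/
open MeasureTheory ProbabilityTheory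
open scoped Classical

/-- Information density of the binary symmetric channel with crossover probability `p`
and uniform input (the output marginal is uniform): `i(x;y) = log(W(y|x)/(1/2))`. -/
noncomputable def bscInfoDen (p : ℝ) (x y : Bool) : ℝ :=
  Real.log ((if y = x then 1 - p else p) / (1 / 2 : ℝ))

/-!
The information density of a block depends only on the number `d(xⁿ, yⁿ)` of positions
where input and output disagree, and it is strictly decreasing in `d` because `p < 1 - p`.
Hence `2ⁿ g(xⁿ, yⁿ)` is the number `∑_{j ≤ d} C(n, j)` of words within Hamming distance
`d(xⁿ, yⁿ)` of `yⁿ`, and the integrand is a function of `d(Xⁿ, Yⁿ)`. Each of the `2ⁿ C(n, t)`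
pairs at distance `t` has probability `2⁻ⁿ pᵗ (1 - p)ⁿ⁻ᵗ`, so `d(Xⁿ, Yⁿ)` is binomial and
both sides are equal.
-/

open Finset Real

@[to_additive]
lemma prod_ite_eq_pow_hammingDist {ι β M : Type*} [Fintype ι] [DecidableEq β] [CommMonoid M]
    (x y : ι → β) (a b : M) :
    ∏ i, (if x i = y i then a else b)
      = b ^ hammingDist x y * a ^ (Fintype.card ι - hammingDist x y) := by
  rw [prod_ite, prod_const, prod_const, mul_comm, hammingDist, ← compl_filter, card_compl,
    Nat.sub_sub_self (card_le_univ _)]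

section Hamming

variable {ι : Type*} [Fintype ι] [DecidableEq ι]

def flipEquiv (y : ι → Bool) : Finset ι ≃ (ι → Bool) where
  toFun s i := if i ∈ s then !y i else y i
  invFun a := {i | a i ≠ y i}
  left_inv s := by ext i; by_cases h : i ∈ s <;> simp [h]
  right_inv a := by funext i; by_cases h : a i = y i <;> simp_all [Bool.eq_not_iff, eq_comm]

lemma hammingDist_flipEquiv (y : ι → Bool) (s : Finset ι) :
    hammingDist (flipEquiv y s) y = #s := by
  unfold hammingDist
  congr 1
  ext i
  by_cases h : i ∈ s <;> simp [flipEquiv, h]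

lemma sum_apply_hammingDist {M : Type*} [AddCommMonoid M] (y : ι → Bool) (f : ℕ → M) :
    ∑ a : ι → Bool, f (hammingDist a y)
      = ∑ t ∈ range (Fintype.card ι + 1), (Fintype.card ι).choose t • f t := by
  rw [← (flipEquiv y).sum_comp, ← powerset_univ]
  simp_rw [hammingDist_flipEquiv]
  rw [sum_powerset_apply_card, card_univ]

lemma card_hammingDist_le (y : ι → Bool) {r : ℕ} (hr : r ≤ Fintype.card ι) :
    #{a : ι → Bool | hammingDist a y ≤ r}
      = ∑ j ∈ range (r + 1), (Fintype.card ι).choose j := by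
  rw [card_eq_sum_ones, sum_filter, sum_apply_hammingDist y fun t => if t ≤ r then 1 else 0]
  simp only [smul_eq_mul, mul_ite, mul_one, mul_zero]
  rw [← sum_filter]
  congr 1
  ext t
  simp only [mem_filter, mem_range]
  omega

lemma sum_prod_apply_hammingDist {R : Type*} [CommSemiring R] (f : ℕ → R) :
    ∑ q : (ι → Bool) × (ι → Bool), f (hammingDist q.1 q.2)
      = 2 ^ Fintype.card ι
        * ∑ t ∈ range (Fintype.card ι + 1), (Fintype.card ι).choose t * f t := by
  rw [Fintype.sum_prod_type_right]
  simp_rw [sum_apply_hammingDist, nsmul_eq_mul]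
  simp

end Hamming

section BSC

variable {ι : Type*} [Fintype ι]

lemma sum_bscInfoDen (p : ℝ) (x y : ι → Bool) :
    ∑ i, bscInfoDen p (x i) (y i)
      = hammingDist x y * log (p / (1 / 2))
        + (Fintype.card ι - hammingDist x y : ℕ) * log ((1 - p) / (1 / 2)) := by
  simp only [bscInfoDen, ite_div, apply_ite Real.log]
  rw [sum_ite_eq_nsmul_hammingDist, hammingDist_comm, nsmul_eq_mul, nsmul_eq_mul]

lemma sum_bscInfoDen_le_iff {p : ℝ} (hp0 : 0 < p) (hp : p < 1 / 2) (x y a : ι → Bool) :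
    ∑ i, bscInfoDen p (x i) (y i) ≤ ∑ i, bscInfoDen p (a i) (y i)
      ↔ hammingDist a y ≤ hammingDist x y := by
  have hlog : log (p / (1 / 2)) < log ((1 - p) / (1 / 2)) :=
    log_lt_log (by positivity) (by gcongr; linarith)
  rw [sum_bscInfoDen, sum_bscInfoDen, Nat.cast_sub hammingDist_le_card_fintype,
    Nat.cast_sub hammingDist_le_card_fintype, ← Nat.cast_le (α := ℝ)]
  constructor <;> intro h <;> nlinarith

lemma sum_ite_sum_bscInfoDen_le [DecidableEq ι] {p : ℝ} (hp0 : 0 < p) (hp : p < 1 / 2)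
    (x y : ι → Bool) :
    ∑ a : ι → Bool,
        (if ∑ i, bscInfoDen p (x i) (y i) ≤ ∑ i, bscInfoDen p (a i) (y i) then (1 : ℝ) else 0)
      = ∑ j ∈ range (hammingDist x y + 1), ((Fintype.card ι).choose j : ℝ) := by
  simp_rw [sum_bscInfoDen_le_iff hp0 hp, sum_boole]
  rw [card_hammingDist_le y hammingDist_le_card_fintype]
  push_cast
  rfl

end BSC

lemma ProbabilityTheory.iIndepFun.measure_setOf_forall_eq {Ω ι β : Type*} [MeasurableSpace Ω]
    {μ : Measure Ω} [Fintype ι] [MeasurableSpace β] [MeasurableSingletonClass β]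
    {Z : ι → Ω → β} (h : iIndepFun Z μ) (z : ι → β) :
    μ {ω | ∀ i, Z i ω = z i} = ∏ i, μ {ω | Z i ω = z i} := by
  simpa only [Set.ofPred_forall] using
    h.meas_iInter (s := fun i => {ω | Z i ω = z i})
      fun i => ⟨{z i}, measurableSet_singleton _, rfl⟩

lemma integral_comp_eq_sum_measureReal {Ω α E : Type*} [MeasurableSpace Ω] {μ : Measure Ω}
    [IsFiniteMeasure μ] [Fintype α] [MeasurableSpace α] [MeasurableSingletonClass α]
    [NormedAddCommGroup E] [NormedSpace ℝ E] [CompleteSpace E] {V : Ω → α} (hV : Measurable V)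
    (f : α → E) :
    ∫ ω, f (V ω) ∂μ = ∑ a, μ.real (V ⁻¹' {a}) • f a := by
  rw [← integral_map hV.aemeasurable AEStronglyMeasurable.of_discrete,
    integral_fintype .of_finite]
  simp_rw [map_measureReal_apply hV (measurableSet_singleton _)]

lemma measureReal_bscBlock_eq {Ω : Type*} [MeasurableSpace Ω] {μ : Measure Ω} {p : ℝ}
    (hp0 : 0 ≤ p) (hp1 : p ≤ 1) {X Y : ℕ → Ω → Bool}
    (hXYindep : iIndepFun (fun k ω => (X k ω, Y k ω)) μ)
    (hXYlaw : ∀ k (x y : Bool), μ {ω | X k ω = x ∧ Y k ω = y}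
        = ENNReal.ofReal ((1 / 2 : ℝ) * (if y = x then 1 - p else p)))
    (n : ℕ) (q : (Fin n → Bool) × (Fin n → Bool)) :
    μ.real ((fun ω => (fun k : Fin n => X k ω, fun k : Fin n => Y k ω)) ⁻¹' {q})
      = (1 / 2) ^ n * (p ^ hammingDist q.1 q.2 * (1 - p) ^ (n - hammingDist q.1 q.2)) := by
  have hset : (fun ω => (fun k : Fin n => X k ω, fun k : Fin n => Y k ω)) ⁻¹' {q}
      = {ω | ∀ k : Fin n, (X k ω, Y k ω) = (q.1 k, q.2 k)} := by
    ext ω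
    simp [Prod.ext_iff, funext_iff, forall_and]
  rw [hset, measureReal_def,
    (hXYindep.precomp Fin.val_injective).measure_setOf_forall_eq fun k => (q.1 k, q.2 k)]
  simp_rw [Prod.mk.injEq, hXYlaw, ENNReal.toReal_prod]
  rw [prod_congr rfl fun k _ => ENNReal.toReal_ofReal (by split_ifs <;> linarith),
    prod_mul_distrib, prod_const, card_univ, Fintype.card_fin, prod_ite_eq_pow_hammingDist,
    hammingDist_comm, Fintype.card_fin]

theorem stmt17_general (p : ℝ) (hp0 : 0 < p) (hp : p < 1 / 2)
    {Ω : Type*} [MeasurableSpace Ω] (μ : Measure Ω) [IsProbabilityMeasure μ]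
    (X : ℕ → Ω → Bool) (Y : ℕ → Ω → Bool)
    (hXm : ∀ k, Measurable (X k)) (hYm : ∀ k, Measurable (Y k))
    -- `((X_k, Y_k))_k` is an i.i.d. sequence with law `P_{XY}(x,y) = P_X(x)W(y|x)`:
    (hXYindep : iIndepFun (fun k ω => (X k ω, Y k ω)) μ)
    (hXYlaw : ∀ k (x y : Bool), μ {ω | X k ω = x ∧ Y k ω = y}
        = ENNReal.ofReal ((1 / 2 : ℝ) * (if y = x then 1 - p else p)))
    (n : ℕ) (M : ℝ) :
    ∫ ω, min 1 (M * (((2 : ℝ) ^ n)⁻¹ *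
        ∑ xbar : Fin n → Bool, (if (∑ k : Fin n, bscInfoDen p (X k.1 ω) (Y k.1 ω))
            ≤ ∑ k : Fin n, bscInfoDen p (xbar k) (Y k.1 ω) then (1 : ℝ) else 0))) ∂μ
      ≤ ∑ t ∈ Finset.range (n + 1),
          (n.choose t : ℝ) * p ^ t * (1 - p) ^ (n - t) *
            min 1 (M * ((2 : ℝ) ^ n)⁻¹ * ∑ j ∈ Finset.range (t + 1), (n.choose j : ℝ)) := by
  set V : Ω → (Fin n → Bool) × (Fin n → Bool) := fun ω => (fun k => X k ω, fun k => Y k ω)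
  set F : ℕ → ℝ := fun t => min 1 (M * ((2 : ℝ) ^ n)⁻¹ * ∑ j ∈ range (t + 1), (n.choose j : ℝ))
  have hV : Measurable V := by fun_prop
  refine le_of_eq ?_
  calc _ = ∫ ω, F (hammingDist (V ω).1 (V ω).2) ∂μ := by
        refine integral_congr_ae (ae_of_all _ fun ω => ?_)
        have h := sum_ite_sum_bscInfoDen_le hp0 hp (fun k : Fin n => X k ω) (fun k => Y k ω)
        simp only [V, F, h, Fintype.card_fin, mul_assoc]
    _ = ∑ q, μ.real (V ⁻¹' {q}) * F (hammingDist q.1 q.2) :=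
        integral_comp_eq_sum_measureReal hV fun q => F (hammingDist q.1 q.2)
    _ = (1 / 2) ^ n * ∑ q : (Fin n → Bool) × (Fin n → Bool),
          p ^ hammingDist q.1 q.2 * (1 - p) ^ (n - hammingDist q.1 q.2)
            * F (hammingDist q.1 q.2) := by
        simp only [V, measureReal_bscBlock_eq hp0.le (by linarith) hXYindep hXYlaw, mul_sum,
          mul_assoc]
    _ = _ := by
        have h := sum_prod_apply_hammingDist (ι := Fin n) fun t => p ^ t * (1 - p) ^ (n - t) * F t
        simp only [Fintype.card_fin] at h
        rw [h, ← mul_assoc, ← mul_pow, one_div_mul_cancel two_ne_zero, one_pow, one_mul]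
        simp only [F, mul_assoc]

/-- RCU bound for the BSC.  For the binary symmetric channel with
crossover probability `p ∈ (0, 1/2)` and uniform input: for every `n ≥ 1` and real
`M ≥ 1`,
`E[min{1, M·g(Xⁿ,Yⁿ)}] ≤ Σ_{t=0}^n C(n,t) pᵗ(1−p)^{n−t} min{1, M·2^{−n} Σ_{j=0}^t C(n,j)}`,
where `g(xⁿ,yⁿ) = 2^{−n} #{x̄ⁿ : i(x̄ⁿ;yⁿ) ≥ i(xⁿ;yⁿ)}`. -/
theorem stmt17 (p : ℝ) (hp0 : 0 < p) (hp : p < 1 / 2)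
    {Ω : Type*} [MeasurableSpace Ω] (μ : Measure Ω) [IsProbabilityMeasure μ]
    (X : ℕ → Ω → Bool) (Y : ℕ → Ω → Bool)
    (hXm : ∀ k, Measurable (X k)) (hYm : ∀ k, Measurable (Y k))
    -- `((X_k, Y_k))_k` is an i.i.d. sequence with law `P_{XY}(x,y) = P_X(x)W(y|x)`:
    (hXYindep : iIndepFun (fun k ω => (X k ω, Y k ω)) μ)
    (hXYlaw : ∀ k (x y : Bool), μ {ω | X k ω = x ∧ Y k ω = y}
        = ENNReal.ofReal ((1 / 2 : ℝ) * (if y = x then 1 - p else p)))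
    (n : ℕ) (hn : 1 ≤ n) (M : ℝ) (hM : 1 ≤ M) :
    ∫ ω, min 1 (M * (((2 : ℝ) ^ n)⁻¹ *
        ∑ xbar : Fin n → Bool, (if (∑ k : Fin n, bscInfoDen p (X k.1 ω) (Y k.1 ω))
            ≤ ∑ k : Fin n, bscInfoDen p (xbar k) (Y k.1 ω) then (1 : ℝ) else 0))) ∂μ
      ≤ ∑ t ∈ Finset.range (n + 1),
          (n.choose t : ℝ) * p ^ t * (1 - p) ^ (n - t) *
            min 1 (M * ((2 : ℝ) ^ n)⁻¹ * ∑ j ∈ Finset.range (t + 1), (n.choose j : ℝ)) :=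
  stmt17_general p hp0 hp μ X Y hXm hYm hXYindep hXYlaw n M
end
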